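/- arXiv:1802.04139 — 2 statements merged into one kernel-verified Lean document; each statement's English description precedes it below -/
import Mathlib

section
/- Set s₀ := ⌊(ν+d)/2⌋ + 1. For every s ≥ s₀ there exists a constant C(s) such that for all subsets B, C ⊆ ℤ^ν × (ℤ^d \ {0}), every matrix M ∈ ℳ^B_C with |M|_s < ∞, and every family h = (h_{k'})_{k'∈B} of complex numbers with ‖h‖_s² := Σ_{k'∈B} ⟨k'⟩^{2s}|h_{k'}|² < ∞, the vector Mh defined by (Mh)_k = Σ_{k'∈B} M_k^{k'} h_{k'} (the sums converging absolutely) satisfies ‖Mh‖_s ≤ C(s)( |M|_{s₀} ‖h‖_s + |M|_s ‖h‖_{s₀} ). -/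
/-!
Put `a k = [M(k)]` and `b = |h|` on `B` (zero off `B`). Entrywise
`|M_k^{k'} h_{k'}| ≤ a(k - k') b(k')`, so `|(Mh)_k| ≤ (a ⋆ b)(k)` and everything reduces to a
weighted `ℓ²` estimate for the convolution of two nonnegative functions on `ℤ^{ν+d}`. Since
`⟨k⟩^s ≤ 2^{s-1} (⟨k - j⟩^s + ⟨j⟩^s)`, the weight falls on one factor at a time; Young's
inequality `‖f ⋆ g‖₂ ≤ ‖f‖₁ ‖g‖₂` then leaves the `ℓ¹` norm of the other factor, which
Cauchy–Schwarz bounds by `K` times its `s₀`-weighted `ℓ²` norm, where `K² = ∑ ⟨k⟩^{-2s₀}` is finite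
because `2 s₀ > ν + d`. All sums live in `ℝ≥0∞`; the finiteness of `a ⋆ b` obtained at the end
gives the absolute convergence of the rows of `Mh`.
-/

open scoped BigOperators ENNReal NNReal

noncomputable section

/-- The index set `ℤ^ν × ℤ^d`. -/
abbrev Idx (ν d : ℕ) := (Fin ν → ℤ) × (Fin d → ℤ)

/-- `s₀ := ⌊(ν+d)/2⌋ + 1`. -/
def s0 (n : ℕ) : ℕ := n / 2 + 1

/-- `⟨k⟩ = max(1,|k|)` for `k ∈ ℤ^ν × ℤ^d`. -/
def japIdx {ν d : ℕ} (k : Idx ν d) : ℝ :=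
  max 1 (Real.sqrt (∑ i, ((k.1 i : ℝ)) ^ 2 + ∑ i, ((k.2 i : ℝ)) ^ 2))

/-- `[M(k)]`: the sup of moduli of entries of `M` (seen as a matrix with rows in `C` and
columns in `B`) on the `k`-th diagonal. -/
def entrySup {ν d : ℕ} (B C : Set (Idx ν d)) (M : Idx ν d → Idx ν d → ℂ) (k : Idx ν d) :
    ℝ≥0∞ :=
  ⨆ (p : Idx ν d × Idx ν d) (_ : p.1 ∈ C ∧ p.2 ∈ B ∧ p.1 - p.2 = k), (‖M p.1 p.2‖₊ : ℝ≥0∞)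

/-- The `s`-decay norm of a matrix with columns indexed by `B` and rows indexed by `C`. -/
def decayNorm {ν d : ℕ} (B C : Set (Idx ν d)) (s : ℝ) (M : Idx ν d → Idx ν d → ℂ) : ℝ≥0∞ :=
  (∑' k : Idx ν d, ENNReal.ofReal (japIdx k ^ (2 * s)) * (entrySup B C M k) ^ 2) ^ (1/2 : ℝ)

/-- Product of matrices, contracting over the index set `C`. -/
def matMulOn {ν d : ℕ} (C : Set (Idx ν d)) (M N : Idx ν d → Idx ν d → ℂ) :
    Idx ν d → Idx ν d → ℂ :=
  fun k k' => ∑' c : C, M k (c : Idx ν d) * N (c : Idx ν d) k'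

/-- The weighted `ℓ²` norm `‖h‖_s` of a family indexed by `B ⊆ ℤ^ν × ℤ^d_*`. -/
def vecNorm {ν d : ℕ} (B : Set (Idx ν d)) (s : ℝ) (h : Idx ν d → ℂ) : ℝ≥0∞ :=
  (∑' k : B, ENNReal.ofReal (japIdx (k : Idx ν d) ^ (2 * s)) * (‖h (k : Idx ν d)‖₊ : ℝ≥0∞) ^ 2)
    ^ (1/2 : ℝ)

open MeasureTheory

section L2Norm

variable {ι : Type*}

def l2Norm (f : ι → ℝ≥0∞) : ℝ≥0∞ := (∑' i, f i ^ 2) ^ (1/2 : ℝ)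

lemma ENNReal.rpow_half_sq (x : ℝ≥0∞) : (x ^ (1/2 : ℝ)) ^ 2 = x := by
  simpa using ENNReal.rpow_inv_natCast_pow two_ne_zero x

lemma ENNReal.sq_rpow_half (x : ℝ≥0∞) : (x ^ 2) ^ (1/2 : ℝ) = x := by
  simpa using ENNReal.pow_rpow_inv_natCast two_ne_zero x

lemma l2Norm_sq (f : ι → ℝ≥0∞) : l2Norm f ^ 2 = ∑' i, f i ^ 2 :=
  ENNReal.rpow_half_sq _

lemma l2Norm_le_l2Norm {f g : ι → ℝ≥0∞} (h : ∀ i, f i ≤ g i) : l2Norm f ≤ l2Norm g :=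
  ENNReal.rpow_le_rpow (ENNReal.tsum_le_tsum fun i => pow_le_pow_left' (h i) 2) (by norm_num)

lemma le_l2Norm (f : ι → ℝ≥0∞) (i : ι) : f i ≤ l2Norm f := by
  rw [← ENNReal.pow_le_pow_left_iff two_ne_zero, l2Norm_sq]
  exact ENNReal.le_tsum (f := fun i => f i ^ 2) i

lemma l2Norm_const_mul (c : ℝ≥0∞) (f : ι → ℝ≥0∞) :
    l2Norm (fun i => c * f i) = c * l2Norm f := by
  simp only [l2Norm, mul_pow, ENNReal.tsum_mul_left]
  rw [ENNReal.mul_rpow_of_nonneg _ _ (by norm_num), ENNReal.sq_rpow_half]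

lemma tsum_mul_le_l2Norm_mul_l2Norm (f g : ι → ℝ≥0∞) :
    ∑' i, f i * g i ≤ l2Norm f * l2Norm g := by
  let _ : MeasurableSpace ι := ⊤
  have := ENNReal.lintegral_mul_le_Lp_mul_Lq Measure.count Real.HolderConjugate.two_two
    measurable_from_top.aemeasurable measurable_from_top.aemeasurable (f := f) (g := g)
  simpa only [lintegral_count, Pi.mul_apply, ENNReal.rpow_two, l2Norm] using this

lemma l2Norm_add_le (f g : ι → ℝ≥0∞) : l2Norm (f + g) ≤ l2Norm f + l2Norm g := by
  let _ : MeasurableSpace ι := ⊤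
  have := ENNReal.lintegral_Lp_add_le (μ := Measure.count) (p := 2)
    measurable_from_top.aemeasurable measurable_from_top.aemeasurable (f := f) (g := g) one_le_two
  simpa only [lintegral_count, Pi.add_apply, ENNReal.rpow_two, l2Norm] using this

lemma tsum_le_l2Norm_inv_mul_l2Norm {w : ι → ℝ≥0∞} (hw₀ : ∀ i, w i ≠ 0) (hw : ∀ i, w i ≠ ⊤)
    (f : ι → ℝ≥0∞) :
    ∑' i, f i ≤ l2Norm (fun i => (w i)⁻¹) * l2Norm (fun i => w i * f i) := by
  calc ∑' i, f i = ∑' i, (w i)⁻¹ * (w i * f i) :=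
        tsum_congr fun i => (ENNReal.inv_mul_cancel_left (hw₀ i) (hw i)).symm
    _ ≤ _ := tsum_mul_le_l2Norm_mul_l2Norm _ _

end L2Norm

section Convolution

variable {G : Type*} [AddCommGroup G]

def tsumConv (f g : G → ℝ≥0∞) (k : G) : ℝ≥0∞ := ∑' j, f (k - j) * g j

lemma tsumConv_comm (f g : G → ℝ≥0∞) : tsumConv f g = tsumConv g f := by
  funext k
  rw [tsumConv, ← (Equiv.subLeft k).tsum_eq]
  simp only [tsumConv, Equiv.subLeft_apply, sub_sub_cancel, mul_comm]

/-- Cauchy–Schwarz against the splitting `f = √f · √f`. -/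
lemma tsumConv_sq_le (f g : G → ℝ≥0∞) (k : G) :
    tsumConv f g k ^ 2 ≤ (∑' j, f j) * ∑' j, f (k - j) * g j ^ 2 := by
  have hcs := tsum_mul_le_l2Norm_mul_l2Norm (fun j => f (k - j) ^ (1/2 : ℝ))
    (fun j => f (k - j) ^ (1/2 : ℝ) * g j)
  simp only [← mul_assoc, ← sq, ENNReal.rpow_half_sq] at hcs
  calc tsumConv f g k ^ 2 ≤ (l2Norm fun j => f (k - j) ^ (1/2 : ℝ)) ^ 2 *
        (l2Norm fun j => f (k - j) ^ (1/2 : ℝ) * g j) ^ 2 := by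
        rw [← mul_pow]; exact pow_le_pow_left' hcs 2
    _ = (∑' j, f j) * ∑' j, f (k - j) * g j ^ 2 := by
        simp only [l2Norm_sq, mul_pow, ENNReal.rpow_half_sq]
        rw [show ∑' j, f (k - j) = ∑' j, f j from (Equiv.subLeft k).tsum_eq f]

lemma l2Norm_tsumConv_le (f g : G → ℝ≥0∞) :
    l2Norm (tsumConv f g) ≤ (∑' j, f j) * l2Norm g := by
  rw [← ENNReal.pow_le_pow_left_iff two_ne_zero, mul_pow, l2Norm_sq, l2Norm_sq]
  calc ∑' k, tsumConv f g k ^ 2 ≤ ∑' k, (∑' j, f j) * ∑' j, f (k - j) * g j ^ 2 :=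
        ENNReal.tsum_le_tsum (tsumConv_sq_le f g)
    _ = (∑' j, f j) * ∑' j, (∑' k, f (k - j)) * g j ^ 2 := by
        rw [ENNReal.tsum_mul_left, ENNReal.tsum_comm]
        simp only [ENNReal.tsum_mul_right]
    _ = (∑' j, f j) ^ 2 * ∑' j, g j ^ 2 := by
        have htrans (j : G) : ∑' k, f (k - j) = ∑' i, f i := (Equiv.subRight j).tsum_eq f
        simp only [htrans, ENNReal.tsum_mul_left]
        ring

lemma l2Norm_mul_tsumConv_le {W V : G → ℝ≥0∞} {c : ℝ≥0∞}
    (hW : ∀ x y, W (x + y) ≤ c * (W x + W y)) (hV₀ : ∀ x, V x ≠ 0) (hV : ∀ x, V x ≠ ⊤)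
    (a b : G → ℝ≥0∞) :
    l2Norm (fun k => W k * tsumConv a b k) ≤ c * l2Norm (fun k => (V k)⁻¹) *
      (l2Norm (fun k => V k * a k) * l2Norm (fun k => W k * b k) +
        l2Norm (fun k => W k * a k) * l2Norm (fun k => V k * b k)) := by
  set K := l2Norm fun k => (V k)⁻¹
  have hpoint : ∀ k, W k * tsumConv a b k ≤
      c * (tsumConv (fun j => W j * a j) b k + tsumConv a (fun j => W j * b j) k) := by
    intro k
    rw [tsumConv, tsumConv, tsumConv, ← ENNReal.tsum_add, ← ENNReal.tsum_mul_left,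
      ← ENNReal.tsum_mul_left]
    refine ENNReal.tsum_le_tsum fun j => ?_
    calc W k * (a (k - j) * b j) ≤ c * (W (k - j) + W j) * (a (k - j) * b j) := by
          gcongr; simpa using hW (k - j) j
      _ = _ := by ring
  have hleft : l2Norm (tsumConv (fun j => W j * a j) b) ≤
      K * l2Norm (fun k => V k * b k) * l2Norm (fun k => W k * a k) := by
    rw [tsumConv_comm]
    exact (l2Norm_tsumConv_le _ _).trans (by gcongr; exact tsum_le_l2Norm_inv_mul_l2Norm hV₀ hV b)
  have hright : l2Norm (tsumConv a fun j => W j * b j) ≤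
      K * l2Norm (fun k => V k * a k) * l2Norm (fun k => W k * b k) :=
    (l2Norm_tsumConv_le _ _).trans (by gcongr; exact tsum_le_l2Norm_inv_mul_l2Norm hV₀ hV a)
  calc l2Norm (fun k => W k * tsumConv a b k)
      ≤ c * l2Norm (tsumConv (fun j => W j * a j) b + tsumConv a fun j => W j * b j) := by
        rw [← l2Norm_const_mul]; exact l2Norm_le_l2Norm hpoint
    _ ≤ c * (l2Norm (tsumConv (fun j => W j * a j) b) +
          l2Norm (tsumConv a fun j => W j * b j)) := by
        gcongr; exact l2Norm_add_le _ _
    _ ≤ c * (K * l2Norm (fun k => V k * b k) * l2Norm (fun k => W k * a k) +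
          K * l2Norm (fun k => V k * a k) * l2Norm (fun k => W k * b k)) := by
        gcongr
    _ = _ := by ring

end Convolution

section Lattice

open Module Submodule in
lemma summable_norm_toLp_intCast_rpow {ι : Type*} [Fintype ι] {r : ℝ}
    (hr : r < -Fintype.card ι) :
    Summable fun x : ι → ℤ => ‖(WithLp.toLp 2 fun i => (x i : ℝ) : EuclideanSpace ℝ ι)‖ ^ r := by
  let b := (EuclideanSpace.basisFun ι ℝ).toBasis
  let L := span ℤ (Set.range b)
  have hL : Summable fun z : L => ‖z‖ ^ r :=
    ZLattice.summable_norm_rpow L r (by rwa [ZLattice.rank ℝ L, finrank_euclideanSpace])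
  refine (hL.comp_injective (b.restrictScalars ℤ).equivFun.symm.injective).congr fun x => ?_
  have hb (i : ι) := Basis.restrictScalars_apply ℤ b i
  have hsum : (∑ i, x i • (b i : EuclideanSpace ℝ ι)) = WithLp.toLp 2 fun i => (x i : ℝ) := by
    ext j
    classical
    simp [b, EuclideanSpace.basisFun_apply, Pi.single_apply]
  rw [Function.comp_apply, Basis.equivFun_symm_apply, Submodule.coe_norm, ← hsum]
  push_cast [hb]
  rfl

variable {ν d : ℕ}

lemma one_le_japIdx (k : Idx ν d) : 1 ≤ japIdx k := le_max_left _ _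

def idxToEuclidean (k : Idx ν d) : EuclideanSpace ℝ (Fin ν ⊕ Fin d) :=
  WithLp.toLp 2 fun i => ((Equiv.sumArrowEquivProdArrow _ _ ℤ).symm k i : ℝ)

lemma idxToEuclidean_add (x y : Idx ν d) :
    idxToEuclidean (x + y) = idxToEuclidean x + idxToEuclidean y := by
  ext (i | i) <;> simp [idxToEuclidean, Equiv.sumArrowEquivProdArrow]

lemma idxToEuclidean_injective : Function.Injective (idxToEuclidean (ν := ν) (d := d)) :=
  fun _ _ h => (Equiv.sumArrowEquivProdArrow _ _ ℤ).symm.injective <| funext fun i =>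
    Int.cast_injective (α := ℝ) (congrFun (congrArg WithLp.ofLp h) i)

lemma japIdx_eq_max_norm (k : Idx ν d) : japIdx k = max 1 ‖idxToEuclidean k‖ := by
  simp [japIdx, idxToEuclidean, EuclideanSpace.norm_eq, Fintype.sum_sum_type,
    Equiv.sumArrowEquivProdArrow]

lemma japIdx_add_le (x y : Idx ν d) : japIdx (x + y) ≤ japIdx x + japIdx y := by
  rw [japIdx_eq_max_norm, idxToEuclidean_add]
  refine max_le (by linarith [one_le_japIdx x, one_le_japIdx y]) ?_
  calc ‖idxToEuclidean x + idxToEuclidean y‖ ≤ ‖idxToEuclidean x‖ + ‖idxToEuclidean y‖ :=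
        norm_add_le _ _
    _ ≤ japIdx x + japIdx y := by
        rw [japIdx_eq_max_norm, japIdx_eq_max_norm]
        exact add_le_add (le_max_right _ _) (le_max_right _ _)

lemma summable_japIdx_rpow {r : ℝ} (hr : (ν + d : ℝ) < r) :
    Summable fun k : Idx ν d => japIdx k ^ (-r) := by
  have hnorm : Summable fun k : Idx ν d => ‖idxToEuclidean k‖ ^ (-r) :=
    ((Equiv.sumArrowEquivProdArrow _ _ ℤ).symm.summable_iff.mpr
      (summable_norm_toLp_intCast_rpow (by simpa using hr)))
  have hzero : {k : Idx ν d | idxToEuclidean k = 0}.Finite :=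
    (Set.finite_singleton 0).preimage idxToEuclidean_injective.injOn
  refine hnorm.of_norm_bounded_eventually ?_
  filter_upwards [hzero.compl_mem_cofinite] with k hk
  rw [Real.norm_of_nonneg (Real.rpow_nonneg (zero_le_one.trans (one_le_japIdx k)) _)]
  exact Real.rpow_le_rpow_of_nonpos (norm_pos_iff.mpr hk)
    ((le_max_right _ _).trans_eq (japIdx_eq_max_norm k).symm) (by linarith)

end Lattice

section Weight

variable {ν d : ℕ}

def japENN (k : Idx ν d) : ℝ≥0∞ := ENNReal.ofReal (japIdx k)

lemma one_le_japENN (k : Idx ν d) : 1 ≤ japENN k := ENNReal.one_le_ofReal.mpr (one_le_japIdx k)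

lemma japENN_ne_top (k : Idx ν d) : japENN k ≠ ⊤ := ENNReal.ofReal_ne_top

lemma japENN_rpow_ne_zero (t : ℝ) (k : Idx ν d) : japENN k ^ t ≠ 0 :=
  (ENNReal.rpow_pos (zero_lt_one.trans_le (one_le_japENN k)) (japENN_ne_top k)).ne'

lemma japENN_rpow_ne_top {t : ℝ} (ht : 0 ≤ t) (k : Idx ν d) : japENN k ^ t ≠ ⊤ :=
  ENNReal.rpow_ne_top_of_nonneg ht (japENN_ne_top k)

lemma one_le_japENN_rpow {t : ℝ} (ht : 0 ≤ t) (k : Idx ν d) : 1 ≤ japENN k ^ t := by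
  simpa using ENNReal.rpow_le_rpow (one_le_japENN k) ht

lemma le_l2Norm_japENN_rpow_mul {t : ℝ} (ht : 0 ≤ t) (f : Idx ν d → ℝ≥0∞) (k : Idx ν d) :
    f k ≤ l2Norm fun k => japENN k ^ t * f k :=
  (le_mul_of_one_le_left' (one_le_japENN_rpow ht k)).trans
    (le_l2Norm (fun k => japENN k ^ t * f k) k)

lemma ofReal_japIdx_rpow (k : Idx ν d) (t : ℝ) : ENNReal.ofReal (japIdx k ^ t) = japENN k ^ t :=
  (ENNReal.ofReal_rpow_of_pos (zero_lt_one.trans_le (one_le_japIdx k))).symm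

lemma japENN_rpow_add_le {s : ℝ} (hs : 1 ≤ s) (x y : Idx ν d) :
    japENN (x + y) ^ s ≤ 2 ^ (s - 1) * (japENN x ^ s + japENN y ^ s) :=
  calc japENN (x + y) ^ s ≤ (japENN x + japENN y) ^ s := by
        rw [japENN, japENN, japENN, ← ENNReal.ofReal_add (by linarith [one_le_japIdx x])
          (by linarith [one_le_japIdx y])]
        gcongr
        exact japIdx_add_le x y
    _ ≤ _ := ENNReal.rpow_add_le_mul_rpow_add_rpow _ _ hs

lemma l2Norm_japENN_rpow_inv_lt_top {t : ℝ} (ht : (ν + d : ℝ) < 2 * t) :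
    l2Norm (fun k : Idx ν d => (japENN k ^ t)⁻¹) < ⊤ := by
  refine ENNReal.rpow_lt_top_of_nonneg (by norm_num) (ne_of_lt ?_)
  calc ∑' k : Idx ν d, ((japENN k ^ t)⁻¹) ^ 2 = ∑' k, ENNReal.ofReal (japIdx k ^ (-(2 * t))) :=
        tsum_congr fun k => by
          rw [ofReal_japIdx_rpow, ENNReal.rpow_neg, mul_comm, ENNReal.rpow_mul, ENNReal.rpow_two,
            ENNReal.inv_pow]
    _ = ENNReal.ofReal (∑' k, japIdx k ^ (-(2 * t))) :=
        (ENNReal.ofReal_tsum_of_nonneg (fun k => Real.rpow_nonneg (by linarith [one_le_japIdx k]) _)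
          (summable_japIdx_rpow ht)).symm
    _ < ⊤ := ENNReal.ofReal_lt_top

lemma decayNorm_eq_l2Norm (B C : Set (Idx ν d)) (t : ℝ) (M : Idx ν d → Idx ν d → ℂ) :
    decayNorm B C t M = l2Norm fun k => japENN k ^ t * entrySup B C M k := by
  simp only [decayNorm, l2Norm, mul_pow, ofReal_japIdx_rpow, mul_comm 2 t, ENNReal.rpow_mul,
    ENNReal.rpow_two]

lemma vecNorm_eq_l2Norm (B : Set (Idx ν d)) (t : ℝ) (h : Idx ν d → ℂ) :
    vecNorm B t h = l2Norm fun k => japENN k ^ t * B.indicator (fun k => ‖h k‖ₑ) k := by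
  rw [vecNorm, l2Norm,
    tsum_subtype B fun k => ENNReal.ofReal (japIdx k ^ (2 * t)) * (‖h k‖₊ : ℝ≥0∞) ^ 2]
  congr 1
  refine tsum_congr fun k => ?_
  by_cases hk : k ∈ B <;>
    simp [hk, mul_pow, ofReal_japIdx_rpow, mul_comm 2 t, ENNReal.rpow_mul, enorm_eq_nnnorm]

lemma l2Norm_japENN_rpow_mul_monotone (f : Idx ν d → ℝ≥0∞) :
    Monotone fun t : ℝ => l2Norm fun k => japENN k ^ t * f k :=
  fun _ _ htt' => l2Norm_le_l2Norm fun k => by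
    gcongr
    exact one_le_japENN k

lemma decayNorm_monotone (B C : Set (Idx ν d)) (M : Idx ν d → Idx ν d → ℂ) :
    Monotone fun t : ℝ => decayNorm B C t M := by
  simpa only [decayNorm_eq_l2Norm] using l2Norm_japENN_rpow_mul_monotone _

lemma vecNorm_monotone (B : Set (Idx ν d)) (h : Idx ν d → ℂ) :
    Monotone fun t : ℝ => vecNorm B t h := by
  simpa only [vecNorm_eq_l2Norm] using l2Norm_japENN_rpow_mul_monotone _

end Weight

section Matrix

variable {ν d : ℕ} {B C : Set (Idx ν d)} (M : Idx ν d → Idx ν d → ℂ) (h : Idx ν d → ℂ)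

lemma enorm_mul_le_entrySup_mul {k k' : Idx ν d} (hk : k ∈ C) (hk' : k' ∈ B) :
    ‖M k k' * h k'‖ₑ ≤ entrySup B C M (k - k') * ‖h k'‖ₑ := by
  rw [enorm_mul]
  gcongr
  exact le_iSup₂_of_le (k, k') ⟨hk, hk', rfl⟩ le_rfl

lemma tsum_enorm_mul_le_tsumConv {k : Idx ν d} (hk : k ∈ C) :
    ∑' k' : B, ‖M k k' * h k'‖ₑ ≤ tsumConv (entrySup B C M) (B.indicator fun k => ‖h k‖ₑ) k := by
  rw [tsum_subtype B fun k' => ‖M k k' * h k'‖ₑ]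
  refine ENNReal.tsum_le_tsum fun k' => ?_
  by_cases hk' : k' ∈ B
  · simpa [hk'] using enorm_mul_le_entrySup_mul M h hk hk'
  · simp [hk']

variable (B C) in
lemma vecNorm_le_l2Norm_japENN_rpow_mul_tsumConv (s : ℝ) :
    vecNorm C s (fun k => ∑' k' : B, M k k' * h k') ≤
      l2Norm fun k => japENN k ^ s * tsumConv (entrySup B C M) (B.indicator fun k => ‖h k‖ₑ) k := by
  rw [vecNorm_eq_l2Norm]
  refine l2Norm_le_l2Norm fun k => ?_
  by_cases hk : k ∈ C
  · rw [Set.indicator_of_mem hk]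
    gcongr
    exact enorm_tsum_le_tsum_enorm.trans (tsum_enorm_mul_le_tsumConv M h hk)
  · simp [hk]

variable (B C) in
lemma l2Norm_japENN_rpow_mul_tsumConv_le {s t : ℝ} (hs : 1 ≤ s) (ht : 0 ≤ t) :
    (l2Norm fun k => japENN k ^ s * tsumConv (entrySup B C M) (B.indicator fun k => ‖h k‖ₑ) k) ≤
      2 ^ (s - 1) * l2Norm (fun k : Idx ν d => (japENN k ^ t)⁻¹) *
        (decayNorm B C t M * vecNorm B s h + decayNorm B C s M * vecNorm B t h) := by
  simpa only [decayNorm_eq_l2Norm, vecNorm_eq_l2Norm] using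
    l2Norm_mul_tsumConv_le (japENN_rpow_add_le hs) (japENN_rpow_ne_zero t) (japENN_rpow_ne_top ht)
      (entrySup B C M) (B.indicator fun k => ‖h k‖ₑ)

end Matrix

lemma one_le_s0 (n : ℕ) : 1 ≤ s0 n := Nat.le_add_left 1 _

lemma lt_two_mul_s0 (n : ℕ) : n < 2 * s0 n := by
  unfold s0
  omega

theorem decay_norm_operator_bound_general
    (ν d : ℕ) (s : ℝ) (hs : (s0 (ν + d) : ℝ) ≤ s) :
    ∃ Cs : ℝ, 0 < Cs ∧
      ∀ B C : Set (Idx ν d), B ⊆ {k | k.2 ≠ 0} → C ⊆ {k | k.2 ≠ 0} →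
      ∀ M : Idx ν d → Idx ν d → ℂ, decayNorm B C s M < ⊤ →
      ∀ h : Idx ν d → ℂ, vecNorm B s h < ⊤ →
        (∀ k ∈ C, Summable fun k' : B => ‖M k (k' : Idx ν d) * h (k' : Idx ν d)‖) ∧
        vecNorm C s (fun k => ∑' k' : B, M k (k' : Idx ν d) * h (k' : Idx ν d))
          ≤ ENNReal.ofReal Cs * (decayNorm B C (s0 (ν + d)) M * vecNorm B s h
              + decayNorm B C s M * vecNorm B (s0 (ν + d)) h) := by
  have ht : 1 ≤ (s0 (ν + d) : ℝ) := Nat.one_le_cast.mpr (one_le_s0 _)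
  have hdim : (ν + d : ℝ) < 2 * s0 (ν + d) := by exact_mod_cast lt_two_mul_s0 (ν + d)
  set t : ℝ := (s0 (ν + d) : ℝ)
  set K := l2Norm fun k : Idx ν d => (japENN k ^ t)⁻¹
  have hK₀ : K ≠ 0 :=
    ((ENNReal.inv_pos.mpr (japENN_rpow_ne_top (by linarith) 0)).trans_le (le_l2Norm _ 0)).ne'
  have hc : (2 : ℝ≥0∞) ^ (s - 1) * K ≠ ⊤ := by
    have := l2Norm_japENN_rpow_inv_lt_top hdim
    finiteness
  refine ⟨(2 ^ (s - 1) * K).toReal, ENNReal.toReal_pos (by simp [hK₀]) hc,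
    fun B C _ _ M hM h hh => ?_⟩
  have hbound := l2Norm_japENN_rpow_mul_tsumConv_le B C M h (ht.trans hs) (by linarith : 0 ≤ t)
  have hfin (k : Idx ν d) : tsumConv (entrySup B C M) (B.indicator fun k => ‖h k‖ₑ) k ≠ ⊤ := by
    have := (decayNorm_monotone B C M hs).trans_lt hM
    have := (vecNorm_monotone B h hs).trans_lt hh
    exact ne_top_of_le_ne_top (by finiteness)
      ((le_l2Norm_japENN_rpow_mul (by linarith) _ k).trans hbound)
  refine ⟨fun k hk => tsum_enorm_ne_top_iff_summable_norm.mp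
    (ne_top_of_le_ne_top (hfin k) (tsum_enorm_mul_le_tsumConv M h hk)), ?_⟩
  rw [ENNReal.ofReal_toReal hc]
  exact (vecNorm_le_l2Norm_japENN_rpow_mul_tsumConv B C M h s).trans hbound

/-- Tame operator bound for matrices with finite `s`-decay norm acting on weighted `ℓ²`
spaces. -/
theorem decay_norm_operator_bound
    (ν d : ℕ) (hν : 1 ≤ ν) (hd : 1 ≤ d) (s : ℝ) (hs : (s0 (ν + d) : ℝ) ≤ s) :
    ∃ Cs : ℝ, 0 < Cs ∧
      ∀ B C : Set (Idx ν d), B ⊆ {k | k.2 ≠ 0} → C ⊆ {k | k.2 ≠ 0} →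
      ∀ M : Idx ν d → Idx ν d → ℂ, decayNorm B C s M < ⊤ →
      ∀ h : Idx ν d → ℂ, vecNorm B s h < ⊤ →
        (∀ k ∈ C, Summable fun k' : B => ‖M k (k' : Idx ν d) * h (k' : Idx ν d)‖) ∧
        vecNorm C s (fun k => ∑' k' : B, M k (k' : Idx ν d) * h (k' : Idx ν d))
          ≤ ENNReal.ofReal Cs * (decayNorm B C (s0 (ν + d)) M * vecNorm B s h
              + decayNorm B C s M * vecNorm B (s0 (ν + d)) h) :=
  decay_norm_operator_bound_general ν d s hs
end
end

section
/- Set s₀ := ⌊(ν+d)/2⌋ + 1 and let s ≥ s₀. There exist constants c(s) > 0 and K(s) > 0 such that: for every finite subset E ⊆ ℤ^ν × (ℤ^d \ {0}) and all matrices A, A' ∈ ℳ^E_E with A invertible, if P := A^{-1}(A' − A) satisfies |P|_{s₀} ≤ c(s), then A' is invertible and |A'^{-1}|_s ≤ K(s)( |A^{-1}|_s + |P|_s |A^{-1}|_{s₀} ). -/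
open scoped BigOperators ENNReal NNReal

noncomputable section

/-- The `s`-decay norm of a finite square matrix indexed by a finite set `E ⊆ ℤ^ν × ℤ^d`. -/
def decayNormFin {ν d : ℕ} (E : Finset (Idx ν d)) (s : ℝ) (M : Matrix ↥E ↥E ℂ) : ℝ≥0∞ :=
  (∑' k : Idx ν d, ENNReal.ofReal (japIdx k ^ (2 * s)) *
      (⨆ (p : ↥E × ↥E) (_ : (p.1 : Idx ν d) - (p.2 : Idx ν d) = k),
        (‖M p.1 p.2‖₊ : ℝ≥0∞)) ^ 2) ^ (1/2 : ℝ)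

/-!
The decay norm `|M|_s` is the `ℓ²` norm, with weight `⟨k⟩ ^ s`, of the sequence of diagonal
suprema `k ↦ [M(k)]`, and the diagonal suprema of a product are dominated by the convolution of
those of the factors. Peetre's inequality `⟨k⟩ ^ s ≤ 2 ^ s (⟨k - q⟩ ^ s + ⟨q⟩ ^ s)` and Young's
inequality `ℓ² * ℓ¹ ⊆ ℓ²` then give the tame estimate
`|M N|_s ≤ 2 ^ s C (|M|_s |N|_{s₀} + |M|_{s₀} |N|_s)`, where `C² = ∑ ⟨k⟩ ^ (-2 s₀)` is finite
because `2 s₀ > ν + d`; by Cauchy–Schwarz, `C |M|_{s₀}` also bounds the `ℓ¹` norm of the diagonal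
suprema, hence every row sum of `M`.

So if `P = A⁻¹ (A' - A)` is small in `|·|_{s₀}`, the row sums of `P` are `< 1`, `1 + P` is
invertible by a Neumann series, and so is `A' = A (1 + P)`. The resolvent identity
`A'⁻¹ = A⁻¹ - P A'⁻¹` and the tame estimate, applied first with `s₀` and then with `s`, bound
`|A'⁻¹|` by `|A⁻¹|` plus terms that are absorbed into the left-hand side.
-/

lemma ENNReal.le_two_mul_of_le_add_inv_two_mul {x b : ℝ≥0∞} (hx : x ≠ ⊤) (h : x ≤ b + 2⁻¹ * x) :
    x ≤ 2 * b := by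
  have hhalf : 2⁻¹ * x ≤ b := by
    refine ENNReal.le_of_add_le_add_right
      (ENNReal.mul_ne_top (ENNReal.inv_ne_top.2 two_ne_zero) hx) ?_
    rwa [← add_mul, ENNReal.inv_two_add_inv_two, one_mul]
  calc x = 2 * (2⁻¹ * x) := by
        rw [ENNReal.mul_inv_cancel_left two_ne_zero ENNReal.ofNat_ne_top]
    _ ≤ 2 * b := by gcongr

namespace DecayNorm

section Lattice

variable {ν d : ℕ}

def toEuclidean : Idx ν d →+ EuclideanSpace ℝ (Fin ν ⊕ Fin d) where
  toFun k := WithLp.toLp 2 (Sum.elim (fun i => (k.1 i : ℝ)) (fun i => (k.2 i : ℝ)))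
  map_zero' := by ext (i | i) <;> simp
  map_add' k l := by ext (i | i) <;> simp

lemma toEuclidean_injective : Function.Injective (toEuclidean (ν := ν) (d := d)) := by
  intro k l h
  have h' := congrArg WithLp.ofLp h
  ext i
  · simpa [toEuclidean] using congrFun h' (Sum.inl i)
  · simpa [toEuclidean] using congrFun h' (Sum.inr i)

lemma toEuclidean_mem_span_basisFun (k : Idx ν d) :
    toEuclidean k ∈
      Submodule.span ℤ (Set.range (EuclideanSpace.basisFun (Fin ν ⊕ Fin d) ℝ).toBasis) := by
  rw [Module.Basis.mem_span_iff_repr_mem]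
  rintro (i | i) <;> simp [toEuclidean]

lemma japIdx_eq_max_norm (k : Idx ν d) : japIdx k = max 1 ‖toEuclidean k‖ := by
  simp [japIdx, EuclideanSpace.norm_eq, Fintype.sum_sum_type, toEuclidean]

lemma japIdx_pos (k : Idx ν d) : 0 < japIdx k := one_pos.trans_le (le_max_left _ _)

lemma japIdx_add_le (k l : Idx ν d) : japIdx (k + l) ≤ japIdx k + japIdx l := by
  simp only [japIdx_eq_max_norm, map_add]
  refine max_le (by linarith [le_max_left 1 ‖toEuclidean k‖, le_max_left 1 ‖toEuclidean l‖]) ?_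
  exact (norm_add_le _ _).trans (add_le_add (le_max_right _ _) (le_max_right _ _))

end Lattice

section Weight

variable {ν d : ℕ}

def weight (s : ℝ) (k : Idx ν d) : ℝ≥0∞ := ENNReal.ofReal (japIdx k) ^ s

lemma weight_ne_zero (s : ℝ) (k : Idx ν d) : weight s k ≠ 0 := by
  simp [weight, ENNReal.rpow_eq_zero_iff, (japIdx_pos k).not_ge]

lemma weight_ne_top (s : ℝ) (k : Idx ν d) : weight s k ≠ ⊤ := by
  simp [weight, ENNReal.rpow_eq_top_iff, (japIdx_pos k).not_ge]

lemma weight_inv_sq (s : ℝ) (k : Idx ν d) : (weight s k)⁻¹ ^ 2 = weight (-(2 * s)) k := by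
  rw [weight, weight, ← ENNReal.rpow_neg, ← ENNReal.rpow_natCast, ← ENNReal.rpow_mul]
  ring_nf

lemma ofReal_japIdx_rpow_two_mul (s : ℝ) (k : Idx ν d) :
    ENNReal.ofReal (japIdx k ^ (2 * s)) = weight s k ^ 2 := by
  rw [← ENNReal.ofReal_rpow_of_pos (japIdx_pos k), mul_comm, ENNReal.rpow_mul, weight,
    ENNReal.rpow_two]

lemma weight_add_le {s : ℝ} (hs : 0 ≤ s) (k l : Idx ν d) :
    weight s (k + l) ≤ 2 ^ s * (weight s k + weight s l) := by
  calc weight s (k + l)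
      ≤ (ENNReal.ofReal (japIdx k) + ENNReal.ofReal (japIdx l)) ^ s := by
        rw [weight, ← ENNReal.ofReal_add (japIdx_pos k).le (japIdx_pos l).le]
        exact ENNReal.rpow_le_rpow (ENNReal.ofReal_le_ofReal (japIdx_add_le k l)) hs
    _ ≤ 2 ^ s * (weight s k + weight s l) := ENNReal.add_rpow_le_two_rpow_mul_rpow_add_rpow _ _ hs

lemma weight_le_ofReal_norm_rpow {r : ℝ} (hr : r ≤ 0) {k : Idx ν d} (hk : k ≠ 0) :
    weight r k ≤ ENNReal.ofReal (‖toEuclidean k‖ ^ r) := by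
  rw [weight, ENNReal.ofReal_rpow_of_pos (japIdx_pos k)]
  refine ENNReal.ofReal_le_ofReal (Real.rpow_le_rpow_of_nonpos ?_ ?_ hr)
  · simpa using toEuclidean_injective.ne hk
  · rw [japIdx_eq_max_norm]
    exact le_max_right _ _

lemma tsum_weight_lt_top {r : ℝ} (hr : r < -(ν + d)) : ∑' k : Idx ν d, weight r k < ⊤ := by
  set L := Submodule.span ℤ (Set.range (EuclideanSpace.basisFun (Fin ν ⊕ Fin d) ℝ).toBasis)
  have hrank : Module.finrank ℤ L = ν + d := by
    rw [ZLattice.rank ℝ L, finrank_euclideanSpace, Fintype.card_sum, Fintype.card_fin,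
      Fintype.card_fin]
  have hL : Summable fun z : L ↦ ‖z‖ ^ r :=
    ZLattice.summable_norm_rpow L r (by rw [hrank]; push_cast; linarith)
  have hr0 : r < 0 := hr.trans_le (by rw [neg_nonpos]; positivity)
  rw [ENNReal.tsum_eq_add_tsum_ite 0]
  refine ENNReal.add_lt_top.2 ⟨(weight_ne_top r 0).lt_top, ?_⟩
  refine lt_of_le_of_lt ?_ (ENNReal.ofReal_tsum_of_nonneg (fun _ => by positivity) hL ▸
    ENNReal.ofReal_lt_top)
  refine le_trans (ENNReal.tsum_le_tsum fun k => ?_) (ENNReal.tsum_comp_le_tsum_of_injective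
    (f := fun k => (⟨toEuclidean k, toEuclidean_mem_span_basisFun k⟩ : L))
    (fun k l h => toEuclidean_injective (congrArg Subtype.val h))
    fun z => ENNReal.ofReal (‖z‖ ^ r))
  split_ifs with hk
  · exact zero_le
  · exact weight_le_ofReal_norm_rpow hr0.le hk

end Weight

section L2

variable {ι : Type*}

def l2Norm (f : ι → ℝ≥0∞) : ℝ≥0∞ := (∑' i, f i ^ 2) ^ (1 / 2 : ℝ)

lemma l2Norm_sq (f : ι → ℝ≥0∞) : l2Norm f ^ 2 = ∑' i, f i ^ 2 := by
  rw [l2Norm, ← ENNReal.rpow_two, ← ENNReal.rpow_mul]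
  norm_num

lemma l2Norm_mono {f g : ι → ℝ≥0∞} (h : ∀ i, f i ≤ g i) : l2Norm f ≤ l2Norm g :=
  ENNReal.rpow_le_rpow (ENNReal.tsum_le_tsum fun i => pow_le_pow_left' (h i) 2) (by norm_num)

lemma l2Norm_const_mul (c : ℝ≥0∞) (f : ι → ℝ≥0∞) :
    l2Norm (fun i => c * f i) = c * l2Norm f := by
  simp only [l2Norm, mul_pow, ENNReal.tsum_mul_left]
  rw [ENNReal.mul_rpow_of_nonneg _ _ (by norm_num), ← ENNReal.rpow_two, ← ENNReal.rpow_mul]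
  norm_num

lemma l2Norm_ne_top {f : ι → ℝ≥0∞} (hf : (Function.support f).Finite) (hf_top : ∀ i, f i ≠ ⊤) :
    l2Norm f ≠ ⊤ := by
  refine ENNReal.rpow_ne_top_of_nonneg (by norm_num) ?_
  rw [tsum_eq_sum (s := hf.toFinset) fun i hi => by simp_all]
  exact ENNReal.sum_ne_top.2 fun i _ => ENNReal.pow_ne_top (hf_top i)

section CountingMeasure

open MeasureTheory

lemma tsum_mul_le_l2Norm_mul (f g : ι → ℝ≥0∞) : ∑' i, f i * g i ≤ l2Norm f * l2Norm g := by
  let _ : MeasurableSpace ι := ⊤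
  have _ : DiscreteMeasurableSpace ι := ⟨fun _ => MeasurableSpace.measurableSet_top⟩
  simpa [l2Norm, lintegral_count, ENNReal.rpow_two] using
    ENNReal.lintegral_mul_le_Lp_mul_Lq Measure.count Real.HolderConjugate.two_two
      (Measurable.of_discrete (f := f)).aemeasurable (Measurable.of_discrete (f := g)).aemeasurable

lemma l2Norm_add_le (f g : ι → ℝ≥0∞) : l2Norm (fun i => f i + g i) ≤ l2Norm f + l2Norm g := by
  let _ : MeasurableSpace ι := ⊤
  have _ : DiscreteMeasurableSpace ι := ⟨fun _ => MeasurableSpace.measurableSet_top⟩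
  simpa [l2Norm, lintegral_count, ENNReal.rpow_two] using
    ENNReal.lintegral_Lp_add_le (μ := Measure.count) (Measurable.of_discrete (f := f)).aemeasurable
      (Measurable.of_discrete (f := g)).aemeasurable (by norm_num : (1 : ℝ) ≤ 2)

end CountingMeasure

end L2

section Convolution

variable {G : Type*} [AddCommGroup G]

def convolve (F H : G → ℝ≥0∞) (k : G) : ℝ≥0∞ := ∑' q, F (k - q) * H q

lemma convolve_comm (F H : G → ℝ≥0∞) : convolve F H = convolve H F := by
  ext k
  rw [convolve, convolve, ← (Equiv.subLeft k).tsum_eq]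
  simp [mul_comm]

/-- Cauchy–Schwarz for the measure `H`. -/
lemma convolve_sq_le (F H : G → ℝ≥0∞) (k : G) :
    convolve F H k ^ 2 ≤ (∑' q, H q) * ∑' q, F (k - q) ^ 2 * H q := by
  have hsqrt : ∀ x : ℝ≥0∞, (x ^ (1 / 2 : ℝ)) ^ 2 = x := fun x => by
    rw [← ENNReal.rpow_two, ← ENNReal.rpow_mul]
    norm_num
  have hcs := tsum_mul_le_l2Norm_mul (fun q => H q ^ (1 / 2 : ℝ))
    (fun q => F (k - q) * H q ^ (1 / 2 : ℝ))
  calc convolve F H k ^ 2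
      = (∑' q, H q ^ (1 / 2 : ℝ) * (F (k - q) * H q ^ (1 / 2 : ℝ))) ^ 2 := by
        congr 1
        refine tsum_congr fun q => ?_
        rw [mul_left_comm, ← sq, hsqrt]
    _ ≤ _ := pow_le_pow_left' hcs 2
    _ = _ := by simp only [mul_pow, l2Norm_sq, hsqrt]

lemma l2Norm_convolve_le (F H : G → ℝ≥0∞) : l2Norm (convolve F H) ≤ l2Norm F * ∑' q, H q := by
  have hsum : l2Norm (convolve F H) ^ 2 ≤ (l2Norm F * ∑' q, H q) ^ 2 :=
    calc l2Norm (convolve F H) ^ 2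
        ≤ ∑' k, (∑' q, H q) * ∑' q, F (k - q) ^ 2 * H q := by
          rw [l2Norm_sq]
          exact ENNReal.tsum_le_tsum (convolve_sq_le F H)
      _ = (∑' q, H q) * ∑' q, (∑' k, F (k - q) ^ 2) * H q := by
          rw [ENNReal.tsum_mul_left, ENNReal.tsum_comm]
          exact congrArg _ (tsum_congr fun q => ENNReal.tsum_mul_right)
      _ = (l2Norm F * ∑' q, H q) ^ 2 := by
          have hshift (q : G) : ∑' k, F (k - q) ^ 2 = l2Norm F ^ 2 := by
            rw [l2Norm_sq]
            exact (Equiv.subRight q).tsum_eq fun k => F k ^ 2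
          simp only [hshift, ENNReal.tsum_mul_left]
          ring
  exact (ENNReal.pow_le_pow_left_iff two_ne_zero).1 hsum

end Convolution

section WeightedNorm

variable {ν d : ℕ}

def wNorm (s : ℝ) (f : Idx ν d → ℝ≥0∞) : ℝ≥0∞ := l2Norm fun k => weight s k * f k

variable (ν d) in
def sobolevConst (t : ℝ) : ℝ≥0∞ := l2Norm fun k : Idx ν d => (weight t k)⁻¹

lemma sobolevConst_ne_top {t : ℝ} (ht : (ν + d : ℝ) < 2 * t) : sobolevConst ν d t ≠ ⊤ := by
  refine ENNReal.rpow_ne_top_of_nonneg (by norm_num) ?_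
  simp only [weight_inv_sq]
  exact (tsum_weight_lt_top (by linarith)).ne

lemma tsum_le_sobolevConst_mul_wNorm (t : ℝ) (f : Idx ν d → ℝ≥0∞) :
    ∑' k, f k ≤ sobolevConst ν d t * wNorm t f := by
  calc ∑' k, f k = ∑' k, (weight t k)⁻¹ * (weight t k * f k) := by
        refine tsum_congr fun k => ?_
        rw [← mul_assoc, ENNReal.inv_mul_cancel (weight_ne_zero t k) (weight_ne_top t k), one_mul]
    _ ≤ sobolevConst ν d t * wNorm t f := tsum_mul_le_l2Norm_mul _ _

lemma wNorm_mono {s : ℝ} {f g : Idx ν d → ℝ≥0∞} (h : ∀ k, f k ≤ g k) : wNorm s f ≤ wNorm s g :=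
  l2Norm_mono fun k => mul_le_mul_right (h k) _

lemma wNorm_add_le (s : ℝ) (f g : Idx ν d → ℝ≥0∞) :
    wNorm s (fun k => f k + g k) ≤ wNorm s f + wNorm s g := by
  simpa only [wNorm, mul_add] using l2Norm_add_le _ _

lemma wNorm_convolve_le {s : ℝ} (hs : 0 ≤ s) (F H : Idx ν d → ℝ≥0∞) :
    wNorm s (convolve F H) ≤ 2 ^ s * (wNorm s F * ∑' q, H q + (∑' q, F q) * wNorm s H) := by
  have hpt (k : Idx ν d) : weight s k * convolve F H k ≤
      2 ^ s * (convolve (fun q => weight s q * F q) H k +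
        convolve F (fun q => weight s q * H q) k) := by
    rw [convolve, convolve, convolve, ← ENNReal.tsum_add, ← ENNReal.tsum_mul_left,
      ← ENNReal.tsum_mul_left]
    refine ENNReal.tsum_le_tsum fun q => ?_
    calc weight s k * (F (k - q) * H q)
        ≤ 2 ^ s * (weight s (k - q) + weight s q) * (F (k - q) * H q) := by
          gcongr
          simpa using weight_add_le hs (k - q) q
      _ = _ := by ring
  calc wNorm s (convolve F H)
      ≤ 2 ^ s * (l2Norm (convolve (fun q => weight s q * F q) H) +
          l2Norm (convolve F (fun q => weight s q * H q))) := by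
        refine (l2Norm_mono hpt).trans ?_
        rw [l2Norm_const_mul]
        exact mul_le_mul_right (l2Norm_add_le _ _) _
    _ ≤ 2 ^ s * (wNorm s F * ∑' q, H q + (∑' q, F q) * wNorm s H) := by
        rw [convolve_comm F, mul_comm (∑' q, F q)]
        gcongr <;> exact l2Norm_convolve_le _ _

end WeightedNorm

section Matrix

variable {ν d : ℕ} {E : Finset (Idx ν d)}

def diagSup (E : Finset (Idx ν d)) (M : Matrix E E ℂ) (k : Idx ν d) : ℝ≥0∞ :=
  ⨆ (p : E × E) (_ : (p.1 : Idx ν d) - p.2 = k), (‖M p.1 p.2‖₊ : ℝ≥0∞)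

lemma decayNormFin_eq_wNorm (s : ℝ) (M : Matrix E E ℂ) :
    decayNormFin E s M = wNorm s (diagSup E M) := by
  simp only [decayNormFin, wNorm, l2Norm, mul_pow, ofReal_japIdx_rpow_two_mul]
  rfl

lemma nnnorm_le_diagSup (M : Matrix E E ℂ) (i j : E) :
    (‖M i j‖₊ : ℝ≥0∞) ≤ diagSup E M (i - j) :=
  le_iSup₂ (f := fun (p : E × E) (_ : (p.1 : Idx ν d) - p.2 = (i : Idx ν d) - j) =>
    (‖M p.1 p.2‖₊ : ℝ≥0∞)) (i, j) rfl

lemma diagSup_le {M : Matrix E E ℂ} {k : Idx ν d} {B : ℝ≥0∞}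
    (h : ∀ i j : E, (i : Idx ν d) - j = k → (‖M i j‖₊ : ℝ≥0∞) ≤ B) : diagSup E M k ≤ B :=
  iSup₂_le fun p hp => h p.1 p.2 hp

lemma diagSup_sub_le (M N : Matrix E E ℂ) (k : Idx ν d) :
    diagSup E (M - N) k ≤ diagSup E M k + diagSup E N k := by
  refine diagSup_le fun i j hij => ?_
  subst hij
  calc (‖(M - N) i j‖₊ : ℝ≥0∞) ≤ ‖M i j‖₊ + ‖N i j‖₊ := by
        exact_mod_cast nnnorm_sub_le (M i j) (N i j)
    _ ≤ _ := add_le_add (nnnorm_le_diagSup M i j) (nnnorm_le_diagSup N i j)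

lemma diagSup_mul_le (M N : Matrix E E ℂ) (k : Idx ν d) :
    diagSup E (M * N) k ≤ convolve (diagSup E M) (diagSup E N) k := by
  refine diagSup_le fun i j hij => ?_
  calc (‖(M * N) i j‖₊ : ℝ≥0∞)
      ≤ ∑ c : E, (‖M i c‖₊ : ℝ≥0∞) * ‖N c j‖₊ := by
        simpa [Matrix.mul_apply] using ENNReal.coe_le_coe.2 (nnnorm_sum_le _ fun c => M i c * N c j)
    _ ≤ ∑ c : E, diagSup E M (k - (c - j)) * diagSup E N (c - j) := by
        refine Finset.sum_le_sum fun c _ => ?_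
        rw [← hij, sub_sub_sub_cancel_right]
        exact mul_le_mul' (nnnorm_le_diagSup M i c) (nnnorm_le_diagSup N c j)
    _ = ∑' c : E, diagSup E M (k - (c - j)) * diagSup E N (c - j) := (tsum_fintype _).symm
    _ ≤ convolve (diagSup E M) (diagSup E N) k :=
         ENNReal.tsum_comp_le_tsum_of_injective (fun a b h => Subtype.ext (sub_left_injective h))
          fun q => diagSup E M (k - q) * diagSup E N q

lemma sum_nnnorm_le_tsum_diagSup (M : Matrix E E ℂ) (i : E) :
    ∑ j, (‖M i j‖₊ : ℝ≥0∞) ≤ ∑' k, diagSup E M k := by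
  calc ∑ j, (‖M i j‖₊ : ℝ≥0∞) ≤ ∑ j : E, diagSup E M (i - j) :=
        Finset.sum_le_sum fun j _ => nnnorm_le_diagSup M i j
    _ = ∑' j : E, diagSup E M (i - j) := (tsum_fintype _).symm
    _ ≤ ∑' k, diagSup E M k :=
        ENNReal.tsum_comp_le_tsum_of_injective
          (fun a b h => Subtype.ext (sub_right_injective h)) _

lemma decayNormFin_ne_top (s : ℝ) (M : Matrix E E ℂ) : decayNormFin E s M ≠ ⊤ := by
  have hsupp : (Function.support (diagSup E M)).Finite := by
    refine (Set.finite_range fun p : E × E => (p.1 : Idx ν d) - p.2).subset fun k hk => ?_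
    by_contra hrange
    exact hk (nonpos_iff_eq_zero.1 (diagSup_le fun i j hij => absurd ⟨(i, j), hij⟩ hrange))
  have hbdd (k : Idx ν d) : diagSup E M k ≠ ⊤ := by
    refine ne_top_of_le_ne_top (b := ((∑ p : E × E, ‖M p.1 p.2‖₊ : ℝ≥0) : ℝ≥0∞))
      ENNReal.coe_ne_top (diagSup_le fun i j _ => ENNReal.coe_le_coe.2 ?_)
    exact Finset.single_le_sum (f := fun p : E × E => ‖M p.1 p.2‖₊) (fun _ _ => zero_le)
      (Finset.mem_univ (i, j))
  rw [decayNormFin_eq_wNorm]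
  exact l2Norm_ne_top (hsupp.subset (Function.support_mul_subset_right _ _))
    fun k => ENNReal.mul_ne_top (weight_ne_top s k) (hbdd k)

lemma decayNormFin_sub_le (s : ℝ) (M N : Matrix E E ℂ) :
    decayNormFin E s (M - N) ≤ decayNormFin E s M + decayNormFin E s N := by
  simp only [decayNormFin_eq_wNorm]
  exact (wNorm_mono (diagSup_sub_le M N)).trans (wNorm_add_le _ _ _)

lemma tsum_diagSup_le (t : ℝ) (M : Matrix E E ℂ) :
    ∑' k, diagSup E M k ≤ sobolevConst ν d t * decayNormFin E t M := by
  rw [decayNormFin_eq_wNorm]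
  exact tsum_le_sobolevConst_mul_wNorm t _

lemma decayNormFin_mul_le {s : ℝ} (hs : 0 ≤ s) (t : ℝ) (M N : Matrix E E ℂ) :
    decayNormFin E s (M * N) ≤ 2 ^ s * sobolevConst ν d t *
      (decayNormFin E s M * decayNormFin E t N + decayNormFin E t M * decayNormFin E s N) := by
  calc decayNormFin E s (M * N)
      ≤ 2 ^ s * (decayNormFin E s M * ∑' k, diagSup E N k +
          (∑' k, diagSup E M k) * decayNormFin E s N) := by
        simp only [decayNormFin_eq_wNorm]
        exact (wNorm_mono (diagSup_mul_le M N)).trans (wNorm_convolve_le hs _ _)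
    _ ≤ 2 ^ s * (decayNormFin E s M * (sobolevConst ν d t * decayNormFin E t N) +
          sobolevConst ν d t * decayNormFin E t M * decayNormFin E s N) := by
        gcongr <;> exact tsum_diagSup_le t _
    _ = _ := by ring

lemma isUnit_one_add_of_tsum_diagSup_lt_one {P : Matrix E E ℂ} (hP : ∑' k, diagSup E P k < 1) :
    IsUnit (1 + P) := by
  let _ : NormedRing (Matrix E E ℂ) := Matrix.linftyOpNormedRing
  let _ : NormedAlgebra ℂ (Matrix E E ℂ) := Matrix.linftyOpNormedAlgebra
  have _ : CompleteSpace (Matrix E E ℂ) := FiniteDimensional.complete ℂ _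
  have hnorm : ‖-P‖₊ < 1 := by
    rw [nnnorm_neg, ← ENNReal.coe_lt_coe, Matrix.linfty_opNNNorm_def, ENNReal.coe_finset_sup]
    refine lt_of_le_of_lt (Finset.sup_le fun i _ => ?_) hP
    simpa using sum_nnnorm_le_tsum_diagSup P i
  simpa using isUnit_one_sub_of_norm_lt_one (x := -P) hnorm

end Matrix

section Perturbation

variable {ν d : ℕ} {E : Finset (Idx ν d)}

lemma isUnit_of_tsum_diagSup_lt_one {A A' : Matrix E E ℂ} (hA : IsUnit A)
    (hP : ∑' k, diagSup E (A⁻¹ * (A' - A)) k < 1) : IsUnit A' := by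
  have hA' : A' = A * (1 + A⁻¹ * (A' - A)) := by
    rw [Matrix.mul_add, ← Matrix.mul_assoc,
      Matrix.mul_nonsing_inv _ ((Matrix.isUnit_iff_isUnit_det A).1 hA)]
    simp
  rw [hA']
  exact hA.mul (isUnit_one_add_of_tsum_diagSup_lt_one hP)

lemma decayNormFin_inv_le {u : ℝ} (hu : 0 ≤ u) (t : ℝ) {A A' : Matrix E E ℂ} (hA : IsUnit A)
    (hA' : IsUnit A') :
    decayNormFin E u A'⁻¹ ≤ decayNormFin E u A⁻¹ + 2 ^ u * sobolevConst ν d t *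
      (decayNormFin E u (A⁻¹ * (A' - A)) * decayNormFin E t A'⁻¹ +
        decayNormFin E t (A⁻¹ * (A' - A)) * decayNormFin E u A'⁻¹) := by
  calc decayNormFin E u A'⁻¹ = decayNormFin E u (A⁻¹ - A⁻¹ * (A' - A) * A'⁻¹) := by
        rw [← Matrix.inv_sub_inv (iff_of_true hA hA'), sub_sub_cancel]
    _ ≤ decayNormFin E u A⁻¹ + decayNormFin E u (A⁻¹ * (A' - A) * A'⁻¹) :=
        decayNormFin_sub_le u _ _
    _ ≤ _ := add_le_add le_rfl (decayNormFin_mul_le hu t _ _)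

/-- Here `x`, `y` stand for `|A'⁻¹|_{s₀}`, `|A'⁻¹|_s` and `q`, `p` for `|P|_{s₀}`, `|P|_s`. -/
lemma le_of_tame_bounds {τ p q a b x y : ℝ≥0∞} (hx : x ≠ ⊤) (hy : y ≠ ⊤) (hq : τ * q ≤ 4⁻¹)
    (hxa : x ≤ a + τ * (q * x + q * x)) (hyb : y ≤ b + τ * (p * x + q * y)) :
    y ≤ 2 * b + 4 * τ * p * a := by
  have hhalf : 2 * 4⁻¹ = (2⁻¹ : ℝ≥0∞) := by
    rw [show (4 : ℝ≥0∞) = 2 * 2 by norm_num, ENNReal.mul_inv (by simp) (by simp),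
      ENNReal.mul_inv_cancel_left two_ne_zero ENNReal.ofNat_ne_top]
  have hx2 : x ≤ 2 * a := by
    refine ENNReal.le_two_mul_of_le_add_inv_two_mul hx (hxa.trans (add_le_add le_rfl ?_))
    calc τ * (q * x + q * x) = 2 * (τ * q) * x := by ring
      _ ≤ 2⁻¹ * x := by rw [← hhalf]; gcongr
  have hy2 : y ≤ (b + 2 * τ * p * a) + 2⁻¹ * y :=
    calc y ≤ b + τ * p * x + τ * q * y := hyb.trans_eq (by ring)
      _ ≤ b + τ * p * (2 * a) + 4⁻¹ * y := by gcongr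
      _ = (b + 2 * τ * p * a) + 4⁻¹ * y := by ring
      _ ≤ (b + 2 * τ * p * a) + 2⁻¹ * y := by gcongr; norm_num
  calc y ≤ 2 * (b + 2 * τ * p * a) := ENNReal.le_two_mul_of_le_add_inv_two_mul hy hy2
    _ = 2 * b + 4 * τ * p * a := by ring

theorem isUnit_and_decayNormFin_inv_le {t s : ℝ} (ht : (ν + d : ℝ) < 2 * t) (hts : t ≤ s)
    {A A' : Matrix E E ℂ} (hA : IsUnit A)
    (hP : 2 ^ s * sobolevConst ν d t * decayNormFin E t (A⁻¹ * (A' - A)) ≤ 4⁻¹) :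
    IsUnit A' ∧ decayNormFin E s A'⁻¹ ≤ 2 * decayNormFin E s A⁻¹ +
      4 * (2 ^ s * sobolevConst ν d t) * decayNormFin E s (A⁻¹ * (A' - A)) *
        decayNormFin E t A⁻¹ := by
  have ht0 : 0 ≤ t := by
    have : (0 : ℝ) ≤ ν + d := by positivity
    linarith
  have hs0 : 0 ≤ s := ht0.trans hts
  have hA' : IsUnit A' := by
    refine isUnit_of_tsum_diagSup_lt_one hA ((tsum_diagSup_le t _).trans_lt ?_)
    refine lt_of_le_of_lt ?_ (hP.trans_lt (by norm_num))
    gcongr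
    exact le_mul_of_one_le_left zero_le
      (by simpa using ENNReal.rpow_le_rpow_of_exponent_le (x := 2) one_le_two hs0)
  refine ⟨hA', le_of_tame_bounds (decayNormFin_ne_top _ _) (decayNormFin_ne_top _ _) hP
    ((decayNormFin_inv_le ht0 t hA hA').trans ?_) (decayNormFin_inv_le hs0 t hA hA')⟩
  gcongr
  exact one_le_two

end Perturbation

lemma add_lt_two_mul_s0 (ν d : ℕ) : (ν + d : ℝ) < 2 * (s0 (ν + d) : ℝ) := by
  have : ν + d < 2 * s0 (ν + d) := by unfold s0; omega
  exact_mod_cast this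

lemma exists_pos_constants {τ : ℝ≥0∞} (hτ : τ ≠ ⊤) :
    ∃ c K : ℝ, 0 < c ∧ 0 < K ∧ τ * ENNReal.ofReal c ≤ 4⁻¹ ∧ 2 ≤ ENNReal.ofReal K ∧
      4 * τ ≤ ENNReal.ofReal K := by
  set T := τ.toReal
  have hT : ENNReal.ofReal T = τ := ENNReal.ofReal_toReal hτ
  have hT0 : 0 ≤ T := ENNReal.toReal_nonneg
  have h2 : (2 : ℝ≥0∞) = ENNReal.ofReal 2 := by norm_num
  have h4 : (4 : ℝ≥0∞) = ENNReal.ofReal 4 := by norm_num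
  refine ⟨(4 * T + 1)⁻¹, 4 * T + 2, by positivity, by positivity, ?_, ?_, ?_⟩
  · rw [← hT, ← ENNReal.ofReal_mul hT0, h4, ← ENNReal.ofReal_inv_of_pos four_pos]
    refine ENNReal.ofReal_le_ofReal ?_
    rw [← div_eq_mul_inv, div_le_iff₀ (by positivity)]
    linarith
  · rw [h2]
    exact ENNReal.ofReal_le_ofReal (by linarith)
  · rw [← hT, h4, ← ENNReal.ofReal_mul (by norm_num)]
    exact ENNReal.ofReal_le_ofReal (by linarith)

end DecayNorm

open DecayNorm

theorem neumann_series_decay_general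
    (ν d : ℕ) (s : ℝ) (hs : (s0 (ν + d) : ℝ) ≤ s) :
    ∃ c K : ℝ, 0 < c ∧ 0 < K ∧
      ∀ E : Finset (Idx ν d), (∀ k ∈ E, k.2 ≠ 0) →
      ∀ A A' : Matrix ↥E ↥E ℂ, IsUnit A →
        decayNormFin E (s0 (ν + d)) (A⁻¹ * (A' - A)) ≤ ENNReal.ofReal c →
        IsUnit A' ∧
        decayNormFin E s A'⁻¹
          ≤ ENNReal.ofReal K * (decayNormFin E s A⁻¹
              + decayNormFin E s (A⁻¹ * (A' - A)) * decayNormFin E (s0 (ν + d)) A⁻¹) := by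
  have ht := add_lt_two_mul_s0 ν d
  obtain ⟨c, K, hc, hK, hcτ, hK2, hKτ⟩ :=
    exists_pos_constants (ENNReal.mul_ne_top (by simp) (sobolevConst_ne_top ht) :
      2 ^ s * sobolevConst ν d (s0 (ν + d)) ≠ ⊤)
  refine ⟨c, K, hc, hK, fun E _ A A' hA hP => ?_⟩
  obtain ⟨hA', hbound⟩ :=
    isUnit_and_decayNormFin_inv_le ht hs hA ((mul_le_mul_right hP _).trans hcτ)
  refine ⟨hA', hbound.trans ?_⟩
  rw [mul_add, mul_assoc]
  gcongr

/-- Perturbative (Neumann series) invertibility in the `s`-decay norm. -/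
theorem neumann_series_decay
    (ν d : ℕ) (hν : 1 ≤ ν) (hd : 1 ≤ d) (s : ℝ) (hs : (s0 (ν + d) : ℝ) ≤ s) :
    ∃ c K : ℝ, 0 < c ∧ 0 < K ∧
      ∀ E : Finset (Idx ν d), (∀ k ∈ E, k.2 ≠ 0) →
      ∀ A A' : Matrix ↥E ↥E ℂ, IsUnit A →
        decayNormFin E (s0 (ν + d)) (A⁻¹ * (A' - A)) ≤ ENNReal.ofReal c →
        IsUnit A' ∧
        decayNormFin E s A'⁻¹
          ≤ ENNReal.ofReal K * (decayNormFin E s A⁻¹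
              + decayNormFin E s (A⁻¹ * (A' - A)) * decayNormFin E (s0 (ν + d)) A⁻¹) :=
  neumann_series_decay_general ν d s hs
end
end
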